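/- arXiv:1405.6278 — 2 statements merged into one kernel-verified Lean document; each statement's English description precedes it below -/
import Mathlib

section
/- Let S be a nonempty semigroup, let T be an S-valued sequence with Π(T) ∩ E(S) = ∅, and let x be a term of T. Then Π(T') is a strict subset of Π(T), where T' is obtained from T by deleting one occurrence of x; equivalently, λ_{T'}(x) = |Π(T'·x) \ Π(T')| ≥ 1. -/
/-- Product, in order, of the nonempty list `a :: l` in a semigroup. -/
def sprod {S : Type*} [Mul S] (a : S) (l : List S) : S := l.foldl (· * ·) a

/-- `pow1 x n = x^(n+1)`: the `(n+1)`-st power of `x` in a semigroup. -/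
def pow1 {S : Type*} [Mul S] (x : S) : ℕ → S := fun n => Nat.rec x (fun _ y => y * x) n

/-- `Π(T)`: the set of products, in order, of nonempty lists which are
permutations of order-preserving sublists of `T`. -/
def PiSet {S : Type*} [Mul S] (T : List S) : Set S :=
  {s | ∃ u : List S, u.Sublist T ∧ ∃ a l, (a :: l).Perm u ∧ sprod a l = s}

/-- `A(L)`: the set of products, in order, of nonempty order-preserving sublists of `L`. -/
def ASet {S : Type*} [Mul S] (L : List S) : Set S :=
  {s | ∃ a l, (a :: l).Sublist L ∧ sprod a l = s}

/-- `HasIndexPeriod x r p` says that `r` is the index of `x` (the least `r > 0` such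
that `x^r = x^t` for some positive `t ≠ r`) and `p` is the period of `x` (the least
`p > 0` with `x^(r+p) = x^r`). Powers are expressed via `pow1 x (n-1) = x^n`. -/
def HasIndexPeriod {S : Type*} [Mul S] (x : S) (r p : ℕ) : Prop :=
  (0 < r ∧ (∃ t, 0 < t ∧ t ≠ r ∧ pow1 x (t - 1) = pow1 x (r - 1)) ∧
    ∀ r', 0 < r' → (∃ t, 0 < t ∧ t ≠ r' ∧ pow1 x (t - 1) = pow1 x (r' - 1)) → r ≤ r') ∧
  (0 < p ∧ pow1 x (r + p - 1) = pow1 x (r - 1) ∧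
    ∀ p', 0 < p' → pow1 x (r + p' - 1) = pow1 x (r - 1) → p ≤ p')

/-! If deleting `x` from `T` does not shrink `Π(T)`, then `Π(T) = Π(T'·x)` contains `Π(T')·x`,
so `Π(T)` is a finite set containing `x` and closed under right multiplication by `x`. The
elements `y ∈ Π(T)` with `Π(T)·y ⊆ Π(T)` then form a finite nonempty subsemigroup, which contains
an idempotent. -/

theorem exists_idempotent_of_finite_of_mul_mem {M : Type*} [Semigroup M] {s : Set M}
    (hne : s.Nonempty) (hfin : s.Finite) (hmul : ∀ a ∈ s, ∀ b ∈ s, a * b ∈ s) :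
    ∃ e ∈ s, e * e = e := by
  let : TopologicalSpace M := ⊥
  have : DiscreteTopology M := ⟨rfl⟩
  exact exists_idempotent_in_compact_subsemigroup (fun _ => continuous_of_discreteTopology)
    s hne hfin.isCompact hmul

theorem exists_idempotent_of_mul_right_mem {M : Type*} [Semigroup M] {P : Set M}
    (hfin : P.Finite) {x : M} (hx : x ∈ P) (hP : ∀ w ∈ P, w * x ∈ P) :
    ∃ e ∈ P, e * e = e := by
  obtain ⟨e, ⟨heP, -⟩, hee⟩ := exists_idempotent_of_finite_of_mul_mem
    (s := {y ∈ P | ∀ w ∈ P, w * y ∈ P}) ⟨x, hx, hP⟩ (hfin.subset fun _ hy => hy.1)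
    fun a ⟨haP, ha⟩ b ⟨_, hb⟩ => ⟨hb a haP, fun w hw => mul_assoc w a b ▸ hb _ (ha w hw)⟩
  exact ⟨e, heP, hee⟩

section piSet

variable {S : Type*} [Mul S]

theorem mem_piSet {T : List S} {s : S} :
    s ∈ PiSet T ↔ ∃ a l, (a :: l).Subperm T ∧ sprod a l = s := by
  constructor
  · rintro ⟨u, hu, a, l, hp, hs⟩
    exact ⟨a, l, ⟨u, hp.symm, hu⟩, hs⟩
  · rintro ⟨a, l, ⟨u, hp, hu⟩, hs⟩
    exact ⟨u, hu, a, l, hp.symm, hs⟩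

theorem piSet_mono {T₁ T₂ : List S} (h : T₁.Subperm T₂) : PiSet T₁ ⊆ PiSet T₂ := by
  intro s hs
  rw [mem_piSet] at hs ⊢
  obtain ⟨a, l, hsub, hs⟩ := hs
  exact ⟨a, l, hsub.trans h, hs⟩

theorem piSet_congr_perm {T₁ T₂ : List S} (h : T₁.Perm T₂) : PiSet T₁ = PiSet T₂ :=
  (piSet_mono h.subperm).antisymm (piSet_mono h.symm.subperm)

theorem mem_piSet_of_mem {T : List S} {x : S} (hx : x ∈ T) : x ∈ PiSet T :=
  mem_piSet.mpr ⟨x, [], List.singleton_subperm_iff.mpr hx, rfl⟩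

theorem sprod_append_singleton (a : S) (l : List S) (x : S) :
    sprod a (l ++ [x]) = sprod a l * x := by
  simp [sprod, List.foldl_append]

theorem mul_mem_piSet_append_singleton {T : List S} {s : S} (hs : s ∈ PiSet T) (x : S) :
    s * x ∈ PiSet (T ++ [x]) := by
  rw [mem_piSet] at hs ⊢
  obtain ⟨a, l, hsub, rfl⟩ := hs
  exact ⟨a, l ++ [x], (List.subperm_append_right [x]).mpr hsub, sprod_append_singleton a l x⟩

theorem piSet_finite (T : List S) : (PiSet T).Finite := by
  let prod? : List S → Option S
    | [] => none
    | a :: l => some (sprod a l)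
  have hF : {u | u ∈ T.sublists.flatMap List.permutations}.Finite :=
    (T.sublists.flatMap List.permutations).finite_toSet
  refine ((hF.image prod?).preimage (Option.some_injective S).injOn).subset ?_
  rintro s ⟨u, hu, a, l, hp, rfl⟩
  refine ⟨a :: l, ?_, rfl⟩
  simp only [Set.mem_ofPred_eq, List.mem_flatMap, List.mem_sublists, List.mem_permutations]
  exact ⟨u, hu, hp⟩

end piSet

theorem stmt_2_general {S : Type*} [Semigroup S]
    (T T' L₁ L₂ : List S) (x : S)
    (hT : T = L₁ ++ x :: L₂) (hT' : T' = L₁ ++ L₂)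
    (hfree : PiSet T ∩ {e : S | e * e = e} = ∅) :
    PiSet T' ⊂ PiSet T ∧ 1 ≤ (PiSet (T' ++ [x]) \ PiSet T').ncard := by
  subst hT hT'
  have hPeq : PiSet (L₁ ++ L₂ ++ [x]) = PiSet (L₁ ++ x :: L₂) :=
    piSet_congr_perm ((List.perm_append_singleton x _).trans List.perm_middle.symm)
  have hsub : PiSet (L₁ ++ L₂) ⊆ PiSet (L₁ ++ x :: L₂) :=
    piSet_mono ((List.sublist_cons_self x L₂).append_left L₁).subperm
  have hnot : ¬ PiSet (L₁ ++ x :: L₂) ⊆ PiSet (L₁ ++ L₂) := by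
    intro hle
    obtain ⟨e, he, hee⟩ := exists_idempotent_of_mul_right_mem (piSet_finite _)
      (mem_piSet_of_mem (by simp)) fun w hw => hPeq ▸ mul_mem_piSet_append_singleton (hle hw) x
    exact Set.eq_empty_iff_forall_notMem.mp hfree e ⟨he, hee⟩
  refine ⟨⟨hsub, hnot⟩, ?_⟩
  obtain ⟨s, hs, hs'⟩ := Set.not_subset.mp hnot
  rw [hPeq]
  exact (Set.ncard_pos (piSet_finite _).sdiff).mpr ⟨s, hs, hs'⟩

/-- If `Π(T) ∩ E(S) = ∅` and `x` is a term of `T`, then deleting one occurrence of `x`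
from `T` yields `T'` with `Π(T') ⊊ Π(T)`; equivalently `λ_{T'}(x) = |Π(T'·x) \ Π(T')| ≥ 1`. -/
theorem stmt_2 {S : Type*} [Semigroup S] [Nonempty S]
    (T T' L₁ L₂ : List S) (x : S)
    (hT : T = L₁ ++ x :: L₂) (hT' : T' = L₁ ++ L₂)
    (hfree : PiSet T ∩ {e : S | e * e = e} = ∅) :
    PiSet T' ⊂ PiSet T ∧ 1 ≤ (PiSet (T' ++ [x]) \ PiSet T').ncard :=
  stmt_2_general T T' L₁ L₂ x hT hT' hfree
end

section
/- Let S be a semigroup, let L be a list of elements of S, and let a ∈ S be an element whose generated cyclic subsemigroup ⟨a⟩ is finite. Let A(L) denote the set of products, in order, of nonempty subsequences of L. If A(L·a) ∩ E(S) = ∅ (where L·a is L with a appended), then A(L) is a strict subset of A(L·a). -/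
/-! If `A(L) = A(L·a)`, then `A(L)` is closed under right multiplication by `a`, because
`s ∈ A(L)` gives `s * a ∈ A(L·a)`. Since `a ∈ A(L·a)`, the whole of `⟨a⟩` lies in `A(L·a)`.
A finite cyclic semigroup contains an idempotent, contradicting `A(L·a) ∩ E(S) = ∅`. -/

lemma pow1_add {S : Type*} [Semigroup S] (x : S) (m n : ℕ) :
    pow1 x (m + n + 1) = pow1 x m * pow1 x n := by
  induction n with
  | zero => rfl
  | succ n ih =>
    change pow1 x (m + n + 1) * x = pow1 x m * (pow1 x n * x)
    rw [ih, mul_assoc]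

-- Finite sets are compact in the discrete topology, so the Ellis–Numakura lemma applies.
lemma exists_idempotent_pow1_of_finite {S : Type*} [Semigroup S] (a : S)
    (hfin : (Set.range (pow1 a)).Finite) : ∃ n, pow1 a n * pow1 a n = pow1 a n := by
  let _ : TopologicalSpace S := ⊥
  have : DiscreteTopology S := ⟨rfl⟩
  have hmul : ∀ x ∈ Set.range (pow1 a), ∀ y ∈ Set.range (pow1 a), x * y ∈ Set.range (pow1 a) := by
    rintro _ ⟨m, rfl⟩ _ ⟨n, rfl⟩
    exact ⟨m + n + 1, pow1_add a m n⟩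
  obtain ⟨_, ⟨n, rfl⟩, hidem⟩ := exists_idempotent_in_compact_subsemigroup
    (fun _ => continuous_of_discreteTopology) _ (Set.range_nonempty _) hfin.isCompact hmul
  exact ⟨n, hidem⟩

lemma ASet_mono {S : Type*} [Mul S] {L M : List S} (h : L.Sublist M) : ASet L ⊆ ASet M := by
  rintro s ⟨b, l, hsub, rfl⟩
  exact ⟨b, l, hsub.trans h, rfl⟩

lemma mul_mem_ASet_append_singleton {S : Type*} [Mul S] {L : List S} {s : S} (hs : s ∈ ASet L)
    (a : S) : s * a ∈ ASet (L ++ [a]) := by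
  obtain ⟨b, l, hsub, rfl⟩ := hs
  refine ⟨b, l ++ [a], by simpa using hsub.append (List.Sublist.refl [a]), ?_⟩
  simp [sprod, List.foldl_append]

lemma pow1_mem_ASet_of_subset {S : Type*} [Mul S] {a : S} {L : List S}
    (h : ASet (L ++ [a]) ⊆ ASet L) (n : ℕ) : pow1 a n ∈ ASet (L ++ [a]) := by
  induction n with
  | zero => exact ⟨a, [], List.sublist_append_right L [a], rfl⟩
  | succ n ih => exact mul_mem_ASet_append_singleton (h ih) a

/-- If `⟨a⟩` is finite and `A(L·a)` contains no idempotent, then `A(L) ⊊ A(L·a)`. -/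
theorem stmt_3 {S : Type*} [Semigroup S]
    (a : S) (hfin : (Set.range (pow1 a)).Finite) (L : List S)
    (hfree : ASet (L ++ [a]) ∩ {e : S | e * e = e} = ∅) :
    ASet L ⊂ ASet (L ++ [a]) := by
  refine (ASet_mono (List.sublist_append_left L [a])).ssubset_of_not_subset fun hsub => ?_
  obtain ⟨n, hidem⟩ := exists_idempotent_pow1_of_finite a hfin
  exact (Set.eq_empty_iff_forall_notMem.mp hfree) (pow1 a n)
    ⟨pow1_mem_ASet_of_subset hsub n, hidem⟩
end
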